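/- Fix T > 0 and λ ∈ ℂ, and let v ∈ C^∞[0,1] solve the dual eigenvalue equation −(1−ρ²)v''(ρ) − (2(1−ρ²)/ρ)v'(ρ) + 2λρv'(ρ) + (Ṽ(ρ)/ρ²)v(ρ) + λ(λ+1)v(ρ) = 0 on (0,1), with Ṽ(ρ) = (6−2ρ²)/(1+ρ²), and assume v(ρ)/ρ² extends continuously to [0,1]. Define χ(t,r) := (T−t)^{−λ} v(r/(T−t)) for 0 < t < T, 0 < r ≤ T−t. Then χ satisfies χ_tt − χ_rr − (2/r)χ_r + Ṽ(r/(T−t)) r^{-2} χ = 0, and the function F(t) := (1/2)∫₀^{T−t} [ r²|χ_t(t,r)|² + r²|χ_r(t,r)|² + Ṽ(r/(T−t))|χ(t,r)|² ] dr satisfies F'(t) ≤ −|χ(t,T−t)|² = −(T−t)^{−2 Re λ} |v(1)|² for all t ∈ (0,T). -/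

import Mathlib

/-- The dual potential `Ṽ(ρ) = (6−2ρ²)/(1+ρ²)`. -/
noncomputable def Vdual (ρ : ℝ) : ℝ := (6 - 2 * ρ ^ 2) / (1 + ρ ^ 2)

/-- The function `χ(t,r) = (T−t)^{−λ} v(r/(T−t))`. -/
noncomputable def chiF (T : ℝ) (lam : ℂ) (v : ℝ → ℂ) (t r : ℝ) : ℂ :=
  ((T - t : ℝ) : ℂ) ^ (-lam) * v (r / (T - t))

/-- The energy-type functional
`F(t) = (1/2)∫₀^{T−t} [r²|χ_t|² + r²|χ_r|² + Ṽ(r/(T−t))|χ|²] dr`. -/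
noncomputable def Ffun (T : ℝ) (lam : ℂ) (v : ℝ → ℂ) (t : ℝ) : ℝ :=
  (1/2) * ∫ r in (0:ℝ)..(T - t),
    (r ^ 2 * ‖deriv (fun s => chiF T lam v s r) t‖ ^ 2
      + r ^ 2 * ‖deriv (fun y => chiF T lam v t y) r‖ ^ 2
      + Vdual (r / (T - t)) * ‖chiF T lam v t r‖ ^ 2)

/-!
In the variable `ρ = r / (T - t)`, `χ` and each of its derivatives is `(T - t) ^ μ f(ρ)` for an
explicit `μ` and `f`, and the wave operator applied to `χ` is `(T - t) ^ (-λ - 2)` times the dual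
eigenvalue operator applied to `v`. The integrand of `F` scales in the same way, so that
`F(t) = (T - t) ^ (1 - 2 Re λ) E` for a fixed energy `E = ½ ∫₀¹ e` of `v`, and
`F'(t) = (2 Re λ - 1) (T - t) ^ (-2 Re λ) E`. Multiplying the eigenvalue equation by
`conj (λ v + x v')` turns it into an exact derivative `B' = (Re λ - ½) e - (x Ṽ' / 2) |v|²`.
Integrating over `[0, 1]` with `B(0) = 0`, `B(1) ≤ -|v(1)|²` (from `Ṽ(1) = 2` and Cauchy's
inequality) and `Ṽ' ≤ 0` gives `(2 Re λ - 1) E ≤ -|v(1)|²`.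
-/

open Set
open scoped InnerProductSpace

lemma hasDerivAt_Vdual (x : ℝ) : HasDerivAt Vdual (-16 * x / (1 + x ^ 2) ^ 2) x := by
  have hnum : HasDerivAt (fun x : ℝ => 6 - 2 * x ^ 2) (-(4 * x)) x := by
    simpa using ((hasDerivAt_pow 2 x).const_mul (2 : ℝ)).const_sub 6 |>.congr_deriv (by ring)
  have hden : HasDerivAt (fun x : ℝ => 1 + x ^ 2) (2 * x) x := by
    simpa using (hasDerivAt_pow 2 x).const_add 1
  exact (hnum.div hden (by positivity)).congr_deriv (by field_simp; ring)

lemma continuous_Vdual : Continuous Vdual :=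
  (continuous_const.sub (continuous_const.mul (continuous_pow 2))).div
    (continuous_const.add (continuous_pow 2)) fun x => by positivity

lemma Vdual_one : Vdual 1 = 2 := by norm_num [Vdual]

lemma hasDerivAt_deriv_of_contDiffOn {F : Type*} [NormedAddCommGroup F] [NormedSpace ℝ F]
    {f : ℝ → F} {s : Set ℝ} (hs : IsOpen s) (hf : ContDiffOn ℝ 2 f s) {x : ℝ} (hx : x ∈ s) :
    HasDerivAt f (deriv f x) x ∧ HasDerivAt (deriv f) (deriv (deriv f) x) x :=
  ⟨((hf.differentiableOn (by norm_num)).differentiableAt (hs.mem_nhds hx)).hasDerivAt,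
    (((hf.deriv_of_isOpen hs (by norm_num : (1 : WithTop ℕ∞) + 1 ≤ 2)).differentiableOn
      one_ne_zero).differentiableAt (hs.mem_nhds hx)).hasDerivAt⟩

lemma derivWithin_Icc_eqOn_deriv {F : Type*} [NormedAddCommGroup F] [NormedSpace ℝ F]
    (f : ℝ → F) (a b : ℝ) : EqOn (derivWithin f (Icc a b)) (deriv f) (Ioo a b) :=
  fun _ hx => derivWithin_of_mem_nhds (Icc_mem_nhds hx.1 hx.2)

/-- `chiF` and all its partial derivatives are of this form. -/
noncomputable def selfSimilar (T : ℝ) (μ : ℂ) (f : ℝ → ℂ) (t r : ℝ) : ℂ :=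
  ((T - t : ℝ) : ℂ) ^ μ * f (r / (T - t))

lemma chiF_eq_selfSimilar (T : ℝ) (lam : ℂ) (v : ℝ → ℂ) :
    chiF T lam v = selfSimilar T (-lam) v := rfl

section SelfSimilar

variable {T t r : ℝ} {μ : ℂ} {f f' : ℝ → ℂ}

lemma hasDerivAt_ofReal_sub_cpow (ht : t < T) (μ : ℂ) :
    HasDerivAt (fun s : ℝ => ((T - s : ℝ) : ℂ) ^ μ) (-μ * ((T - t : ℝ) : ℂ) ^ (μ - 1)) t := by
  have hsub : HasDerivAt (fun s : ℝ => T - s) (-1) t := by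
    simpa using (hasDerivAt_id t).const_sub T
  have hslit : ((T - t : ℝ) : ℂ) ∈ Complex.slitPlane :=
    Complex.ofReal_mem_slitPlane.mpr (sub_pos.mpr ht)
  have hpow : HasDerivAt (fun y : ℝ => (y : ℂ) ^ μ) (μ * ((T - t : ℝ) : ℂ) ^ (μ - 1)) (T - t) :=
    (Complex.hasStrictDerivAt_cpow_const hslit).hasDerivAt.comp_ofReal
  exact (hpow.scomp t hsub).congr_deriv (by simp)

lemma ofReal_cpow_sub_one {c : ℝ} (hc : 0 < c) (μ : ℂ) :
    (c : ℂ) ^ (μ - 1) = (c : ℂ) ^ μ / c := by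
  rw [Complex.cpow_sub _ _ (by exact_mod_cast hc.ne'), Complex.cpow_one]

lemma hasDerivAt_selfSimilar_time (ht : t < T)
    (hf : HasDerivAt f (f' (r / (T - t))) (r / (T - t))) :
    HasDerivAt (fun s => selfSimilar T μ f s r)
      (selfSimilar T (μ - 1) (fun ρ => -μ * f ρ + ρ * f' ρ) t r) t := by
  have hc : 0 < T - t := sub_pos.mpr ht
  have hρ : HasDerivAt (fun s : ℝ => r / (T - s)) (r / (T - t) ^ 2) t := by
    have hsub : HasDerivAt (fun s : ℝ => T - s) (-1) t := by
      simpa using (hasDerivAt_id t).const_sub T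
    exact ((hsub.inv hc.ne').const_mul r).congr_deriv (by ring)
  refine ((hasDerivAt_ofReal_sub_cpow ht μ).mul (hf.scomp t hρ)).congr_deriv ?_
  have hc' : (T : ℂ) - t ≠ 0 := by exact_mod_cast hc.ne'
  rw [selfSimilar, ofReal_cpow_sub_one hc, Complex.real_smul, Function.comp_apply]
  push_cast
  field_simp

lemma hasDerivAt_selfSimilar_space (ht : t < T)
    (hf : HasDerivAt f (f' (r / (T - t))) (r / (T - t))) :
    HasDerivAt (fun y => selfSimilar T μ f t y) (selfSimilar T (μ - 1) f' t r) r := by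
  have hc : 0 < T - t := sub_pos.mpr ht
  have hρ : HasDerivAt (fun y : ℝ => y / (T - t)) (1 / (T - t)) r := by
    simpa using (hasDerivAt_id r).div_const (T - t)
  refine ((hf.scomp r hρ).const_mul _).congr_deriv ?_
  have hc' : (T : ℂ) - t ≠ 0 := by exact_mod_cast hc.ne'
  rw [selfSimilar, ofReal_cpow_sub_one hc, Complex.real_smul]
  push_cast
  field_simp

lemma norm_sq_selfSimilar (ht : t < T) (μ : ℂ) (f : ℝ → ℂ) :
    ‖selfSimilar T μ f t r‖ ^ 2 = (T - t) ^ (2 * μ.re) * ‖f (r / (T - t))‖ ^ 2 := by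
  rw [selfSimilar, norm_mul, mul_pow, Complex.norm_cpow_eq_rpow_re_of_pos (sub_pos.mpr ht),
    ← Real.rpow_natCast, ← Real.rpow_mul (sub_pos.mpr ht).le, mul_comm μ.re]
  norm_num

end SelfSimilar

noncomputable def dualEigenOp (lam : ℂ) (v : ℝ → ℂ) (ρ : ℝ) : ℂ :=
  -(1 - (ρ:ℂ) ^ 2) * deriv (deriv v) ρ
    - (2 * (1 - (ρ:ℂ) ^ 2) / (ρ:ℂ)) * deriv v ρ
    + 2 * lam * (ρ:ℂ) * deriv v ρ
    + (((Vdual ρ : ℝ) : ℂ) / (ρ:ℂ) ^ 2) * v ρ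
    + lam * (lam + 1) * v ρ

section Lightcone

variable {T t r : ℝ} {lam : ℂ} {v : ℝ → ℂ}

lemma div_mem_Ioo_of_lt (hr : 0 < r) (hrt : r < T - t) : r / (T - t) ∈ Ioo (0 : ℝ) 1 :=
  ⟨div_pos hr (hr.trans hrt), (div_lt_one (hr.trans hrt)).mpr hrt⟩

lemma hasDerivAt_chiF_time (hv : ContDiffOn ℝ 2 v (Ioo 0 1)) (hr : 0 < r) (hrt : r < T - t) :
    HasDerivAt (fun s => chiF T lam v s r)
      (selfSimilar T (-lam - 1) (fun ρ => lam * v ρ + ρ * deriv v ρ) t r) t := by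
  have hv' := hasDerivAt_deriv_of_contDiffOn isOpen_Ioo hv (div_mem_Ioo_of_lt hr hrt)
  have h := hasDerivAt_selfSimilar_time (μ := -lam) (by linarith) hv'.1
  simp only [neg_neg] at h
  exact h

lemma hasDerivAt_chiF_space (hv : ContDiffOn ℝ 2 v (Ioo 0 1)) (hr : 0 < r) (hrt : r < T - t) :
    HasDerivAt (fun y => chiF T lam v t y) (selfSimilar T (-lam - 1) (deriv v) t r) r :=
  hasDerivAt_selfSimilar_space (by linarith)
    (hasDerivAt_deriv_of_contDiffOn isOpen_Ioo hv (div_mem_Ioo_of_lt hr hrt)).1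

lemma deriv_deriv_chiF_time (hv : ContDiffOn ℝ 2 v (Ioo 0 1)) (hr : 0 < r) (hrt : r < T - t) :
    deriv (fun s => deriv (fun s' => chiF T lam v s' r) s) t
      = selfSimilar T (-lam - 2) (fun ρ => (lam + 1) * (lam * v ρ + ρ * deriv v ρ)
          + ρ * ((lam + 1) * deriv v ρ + ρ * deriv (deriv v) ρ)) t r := by
  obtain ⟨hv1, hv2⟩ := hasDerivAt_deriv_of_contDiffOn isOpen_Ioo hv (div_mem_Ioo_of_lt hr hrt)
  have hfirst : (fun s => deriv (fun s' => chiF T lam v s' r) s)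
      =ᶠ[nhds t] fun s => selfSimilar T (-lam - 1) (fun ρ => lam * v ρ + ρ * deriv v ρ) s r := by
    filter_upwards [Iio_mem_nhds (show t < T - r by linarith)] with s hs
    exact (hasDerivAt_chiF_time hv hr (by linarith [mem_Iio.mp hs])).deriv
  have hg : HasDerivAt (fun ρ : ℝ => lam * v ρ + ρ * deriv v ρ)
      ((lam + 1) * deriv v (r / (T - t)) + (r / (T - t) : ℝ) * deriv (deriv v) (r / (T - t)))
      (r / (T - t)) :=
    ((hv1.const_mul lam).add ((hasDerivAt_id _).ofReal_comp.mul hv2)).congr_deriv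
      (by simp; ring)
  rw [hfirst.deriv_eq, (hasDerivAt_selfSimilar_time (show t < T by linarith)
    (f' := fun ρ => (lam + 1) * deriv v ρ + ρ * deriv (deriv v) ρ) hg).deriv]
  simp only [selfSimilar]
  ring_nf

lemma deriv_deriv_chiF_space (hv : ContDiffOn ℝ 2 v (Ioo 0 1)) (hr : 0 < r) (hrt : r < T - t) :
    deriv (fun y => deriv (fun y' => chiF T lam v t y') y) r
      = selfSimilar T (-lam - 2) (deriv (deriv v)) t r := by
  have hfirst : (fun y => deriv (fun y' => chiF T lam v t y') y)
      =ᶠ[nhds r] fun y => selfSimilar T (-lam - 1) (deriv v) t y := by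
    filter_upwards [Ioo_mem_nhds hr hrt] with y hy
    exact (hasDerivAt_chiF_space hv hy.1 hy.2).deriv
  rw [hfirst.deriv_eq, (hasDerivAt_selfSimilar_space (by linarith)
    (hasDerivAt_deriv_of_contDiffOn isOpen_Ioo hv (div_mem_Ioo_of_lt hr hrt)).2).deriv]
  ring_nf

lemma waveOp_chiF (hv : ContDiffOn ℝ 2 v (Ioo 0 1)) (hr : 0 < r) (hrt : r < T - t) :
    deriv (fun s => deriv (fun s' => chiF T lam v s' r) s) t
      - deriv (fun y => deriv (fun y' => chiF T lam v t y') y) r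
      - ((2 / r : ℝ) : ℂ) * deriv (fun y => chiF T lam v t y) r
      + ((Vdual (r / (T - t)) / r ^ 2 : ℝ) : ℂ) * chiF T lam v t r
      = ((T - t : ℝ) : ℂ) ^ (-lam - 2) * dualEigenOp lam v (r / (T - t)) := by
  rw [deriv_deriv_chiF_time hv hr hrt, deriv_deriv_chiF_space hv hr hrt,
    (hasDerivAt_chiF_space hv hr hrt).deriv, chiF_eq_selfSimilar]
  have hc : 0 < T - t := hr.trans hrt
  have hr0 : (r : ℂ) ≠ 0 := by exact_mod_cast hr.ne'
  have hc0 : (T : ℂ) - t ≠ 0 := by exact_mod_cast hc.ne'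
  have hpow1 : ((T - t : ℝ) : ℂ) ^ (-lam - 1) = ((T - t : ℝ) : ℂ) ^ (-lam) / ((T - t : ℝ) : ℂ) :=
    ofReal_cpow_sub_one hc _
  have hpow2 : ((T - t : ℝ) : ℂ) ^ (-lam - 2)
      = ((T - t : ℝ) : ℂ) ^ (-lam) / ((T - t : ℝ) : ℂ) / ((T - t : ℝ) : ℂ) := by
    rw [show -lam - 2 = -lam - 1 - 1 by ring, ofReal_cpow_sub_one hc, hpow1]
  simp only [selfSimilar, dualEigenOp, hpow1, hpow2]
  push_cast
  field_simp
  ring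

end Lightcone

section Energy

variable {lam : ℂ} {v u : ℝ → ℂ}

/-- The integrand of `Ffun` in the variable `x = r / (T - t)`, up to the factor
`(T - t) ^ (-2 Re λ)`, with `u` in the role of `v'`. -/
noncomputable def energyDensity (lam : ℂ) (v u : ℝ → ℂ) (x : ℝ) : ℝ :=
  x ^ 2 * ‖lam * v x + x * u x‖ ^ 2 + x ^ 2 * ‖u x‖ ^ 2 + Vdual x * ‖v x‖ ^ 2

noncomputable def energyFlux (lam : ℂ) (v u : ℝ → ℂ) (x : ℝ) : ℝ :=
  x ^ 2 * ⟪lam * v x + x * u x, u x⟫_ℝ - x ^ 3 / 2 * (‖lam * v x + x * u x‖ ^ 2 + ‖u x‖ ^ 2)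
    - x * Vdual x / 2 * ‖v x‖ ^ 2

noncomputable def energy (lam : ℂ) (v : ℝ → ℂ) : ℝ :=
  1 / 2 * ∫ x in (0 : ℝ)..1, energyDensity lam v (derivWithin v (Icc 0 1)) x

lemma energyFlux_zero : energyFlux lam v u 0 = 0 := by simp [energyFlux]

lemma energyFlux_one_le : energyFlux lam v u 1 ≤ -‖v 1‖ ^ 2 := by
  have h := norm_sub_sq_real (lam * v 1 + u 1) (u 1)
  simp only [energyFlux, Vdual_one, Complex.ofReal_one, one_mul, one_pow] at h ⊢
  nlinarith [sq_nonneg ‖lam * v 1 + u 1 - u 1‖]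

lemma continuousOn_energyDensity {s : Set ℝ} (hv : ContinuousOn v s) (hu : ContinuousOn u s) :
    ContinuousOn (energyDensity lam v u) s := by
  have := continuous_Vdual
  have := Complex.continuous_ofReal
  unfold energyDensity
  fun_prop

lemma continuousOn_energyFlux {s : Set ℝ} (hv : ContinuousOn v s) (hu : ContinuousOn u s) :
    ContinuousOn (energyFlux lam v u) s := by
  have := continuous_Vdual
  have := Complex.continuous_ofReal
  unfold energyFlux
  fun_prop

lemma hasDerivAt_energyFlux {x : ℝ} (hx : x ≠ 0) (hv : HasDerivAt v (deriv v x) x)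
    (hv' : HasDerivAt (deriv v) (deriv (deriv v) x) x) (hode : dualEigenOp lam v x = 0) :
    HasDerivAt (energyFlux lam v (deriv v))
      ((lam.re - 1 / 2) * energyDensity lam v (deriv v) x
        + 8 * x ^ 2 / (1 + x ^ 2) ^ 2 * ‖v x‖ ^ 2) x := by
  have hw : HasDerivAt (fun y : ℝ => lam * v y + y * deriv v y)
      (lam * deriv v x + (1 * deriv v x + x * deriv (deriv v) x)) x :=
    (hv.const_mul lam).add ((hasDerivAt_id x).ofReal_comp.mul hv')
  refine ((((hasDerivAt_pow 2 x).mul (hw.inner ℝ hv')).sub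
    (((hasDerivAt_pow 3 x).div_const 2).mul (hw.norm_sq.add hv'.norm_sq))).sub
    ((((hasDerivAt_id x).mul (hasDerivAt_Vdual x)).div_const 2).mul hv.norm_sq)).congr_deriv ?_
  have hx' : (x : ℂ) ≠ 0 := by exact_mod_cast hx
  have hcleared : -(1 - (x : ℂ) ^ 2) * x ^ 2 * deriv (deriv v) x
      - 2 * x * (1 - (x : ℂ) ^ 2) * deriv v x + 2 * lam * x ^ 3 * deriv v x
      + Vdual x * v x + lam * (lam + 1) * x ^ 2 * v x = 0 := by
    rw [dualEigenOp] at hode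
    field_simp at hode
    linear_combination hode
  have hre := congrArg Complex.re hcleared
  have him := congrArg Complex.im hcleared
  simp only [energyDensity, Complex.inner, ← Complex.ofReal_pow, Complex.sq_norm,
    Complex.normSq_apply, Complex.add_re, Complex.add_im, Complex.sub_re, Complex.sub_im,
    Complex.mul_re, Complex.mul_im, Complex.neg_re, Complex.neg_im, Complex.one_re,
    Complex.one_im, Complex.ofReal_re, Complex.ofReal_im, Complex.re_ofNat, Complex.im_ofNat,
    Complex.conj_re, Complex.conj_im, Complex.zero_re, Complex.zero_im, Pi.add_apply,
    Pi.mul_apply, id] at hre him ⊢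
  -- the real part of `conj (λ v + x v')` times the equation
  linear_combination -(lam.re * (v x).re - lam.im * (v x).im + x * (deriv v x).re) * hre
    - (lam.re * (v x).im + lam.im * (v x).re + x * (deriv v x).im) * him

end Energy

theorem mul_energy_le {lam : ℂ} {v : ℝ → ℂ} (hv : ContDiffOn ℝ 2 v (Icc 0 1))
    (hode : ∀ ρ ∈ Ioo (0 : ℝ) 1, dualEigenOp lam v ρ = 0) :
    (2 * lam.re - 1) * energy lam v ≤ -‖v 1‖ ^ 2 := by
  set u := derivWithin v (Icc 0 1)
  set Q : ℝ → ℝ := fun x => 8 * x ^ 2 / (1 + x ^ 2) ^ 2 * ‖v x‖ ^ 2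
  have hvc : ContinuousOn v (Icc 0 1) := hv.continuousOn
  have huc : ContinuousOn u (Icc 0 1) :=
    hv.continuousOn_derivWithin (uniqueDiffOn_Icc zero_lt_one) one_le_two
  have hue : EqOn u (deriv v) (Ioo 0 1) := derivWithin_Icc_eqOn_deriv v 0 1
  have hQc : ContinuousOn Q (Icc 0 1) := by fun_prop (disch := intros; positivity)
  have hflux : ∀ x ∈ Ioo (0 : ℝ) 1,
      HasDerivAt (energyFlux lam v u) ((lam.re - 1 / 2) * energyDensity lam v u x + Q x) x := by
    intro x hx
    obtain ⟨hv1, hv2⟩ := hasDerivAt_deriv_of_contDiffOn isOpen_Ioo (hv.mono Ioo_subset_Icc_self) hx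
    have hnear : energyFlux lam v u =ᶠ[nhds x] energyFlux lam v (deriv v) := by
      filter_upwards [isOpen_Ioo.mem_nhds hx] with y hy
      simp only [energyFlux, hue hy]
    have hdensity : energyDensity lam v u x = energyDensity lam v (deriv v) x := by
      simp only [energyDensity, hue hx]
    rw [hdensity]
    exact (hasDerivAt_energyFlux hx.1.ne' hv1 hv2 (hode x hx)).congr_of_eventuallyEq hnear
  have hint : IntervalIntegrable (fun x => (lam.re - 1 / 2) * energyDensity lam v u x)
      MeasureTheory.volume 0 1 :=
    (continuousOn_const.mul (continuousOn_energyDensity hvc huc)).intervalIntegrable_of_Icc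
      zero_le_one
  have hftc := intervalIntegral.integral_eq_sub_of_hasDerivAt_of_le zero_le_one
    (continuousOn_energyFlux hvc huc) hflux (hint.add (hQc.intervalIntegrable_of_Icc zero_le_one))
  rw [intervalIntegral.integral_add hint (hQc.intervalIntegrable_of_Icc zero_le_one),
    intervalIntegral.integral_const_mul, energyFlux_zero, sub_zero] at hftc
  have hQ : 0 ≤ ∫ x in (0 : ℝ)..1, Q x :=
    intervalIntegral.integral_nonneg zero_le_one fun x _ => by positivity
  have hflux_one : energyFlux lam v u 1 ≤ -‖v 1‖ ^ 2 := energyFlux_one_le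
  rw [energy]
  linarith

section Scaling

variable {T t : ℝ} {lam : ℂ} {v : ℝ → ℂ}

lemma energyIntegrand_eq (hv : ContDiffOn ℝ 2 v (Ioo 0 1)) {r : ℝ} (hr : 0 < r)
    (hrt : r < T - t) :
    r ^ 2 * ‖deriv (fun s => chiF T lam v s r) t‖ ^ 2
      + r ^ 2 * ‖deriv (fun y => chiF T lam v t y) r‖ ^ 2
      + Vdual (r / (T - t)) * ‖chiF T lam v t r‖ ^ 2
    = (T - t) ^ (-2 * lam.re) * energyDensity lam v (derivWithin v (Icc 0 1)) (r / (T - t)) := by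
  have hc : 0 < T - t := hr.trans hrt
  have ht : t < T := sub_pos.mp hc
  rw [(hasDerivAt_chiF_time hv hr hrt).deriv, (hasDerivAt_chiF_space hv hr hrt).deriv,
    chiF_eq_selfSimilar, norm_sq_selfSimilar ht, norm_sq_selfSimilar ht, norm_sq_selfSimilar ht,
    energyDensity,
    derivWithin_Icc_eqOn_deriv v 0 1 (div_mem_Ioo_of_lt hr hrt)]
  have hpow : (T - t) ^ (2 * (-lam - 1).re) = (T - t) ^ (-2 * lam.re) / (T - t) ^ 2 := by
    rw [← Real.rpow_natCast, ← Real.rpow_sub hc]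
    congr 1
    simp
    ring
  rw [hpow, show 2 * (-lam).re = -2 * lam.re by simp]
  push_cast
  field_simp

lemma Ffun_eq (hv : ContDiffOn ℝ 2 v (Ioo 0 1)) (ht : t < T) :
    Ffun T lam v t = (T - t) ^ (1 - 2 * lam.re) * energy lam v := by
  have hc : 0 < T - t := sub_pos.mpr ht
  rw [Ffun, intervalIntegral.integral_congr_uIoo (g := fun r => (T - t) ^ (-2 * lam.re)
      * energyDensity lam v (derivWithin v (Icc 0 1)) (r / (T - t))),
    intervalIntegral.integral_const_mul, intervalIntegral.integral_comp_div _ hc.ne',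
    zero_div, div_self hc.ne', energy, show 1 - 2 * lam.re = -2 * lam.re + 1 by ring,
    Real.rpow_add_one hc.ne', smul_eq_mul]
  · ring
  · intro r hr
    rw [uIoo_of_le hc.le] at hr
    exact energyIntegrand_eq hv hr.1 hr.2

lemma hasDerivAt_Ffun (hv : ContDiffOn ℝ 2 v (Ioo 0 1)) (ht : t < T) :
    HasDerivAt (Ffun T lam v) ((2 * lam.re - 1) * (T - t) ^ (-2 * lam.re) * energy lam v) t := by
  have hc : 0 < T - t := sub_pos.mpr ht
  have hnear : Ffun T lam v =ᶠ[nhds t] fun s => (T - s) ^ (1 - 2 * lam.re) * energy lam v := by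
    filter_upwards [Iio_mem_nhds ht] with s hs
    exact Ffun_eq hv hs
  have hsub : HasDerivAt (fun s : ℝ => T - s) (-1) t := by
    simpa using (hasDerivAt_id t).const_sub T
  refine (((hsub.rpow_const (Or.inl hc.ne')).mul_const _).congr_of_eventuallyEq
    hnear).congr_deriv ?_
  rw [show 1 - 2 * lam.re - 1 = -2 * lam.re by ring]
  ring

end Scaling

theorem stmt_14_general (T : ℝ) (lam : ℂ) (v : ℝ → ℂ)
    (hv : ContDiffOn ℝ (⊤ : ℕ∞) v (Set.Icc 0 1))
    (hode : ∀ ρ ∈ Set.Ioo (0:ℝ) 1,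
      -(1 - (ρ:ℂ) ^ 2) * deriv (deriv v) ρ
      - (2 * (1 - (ρ:ℂ) ^ 2) / (ρ:ℂ)) * deriv v ρ
      + 2 * lam * (ρ:ℂ) * deriv v ρ
      + (((Vdual ρ : ℝ) : ℂ) / (ρ:ℂ) ^ 2) * v ρ
      + lam * (lam + 1) * v ρ = 0) :
    (∀ t r : ℝ, 0 < t → t < T → 0 < r → r < T - t →
      deriv (fun s => deriv (fun s' => chiF T lam v s' r) s) t
      - deriv (fun y => deriv (fun y' => chiF T lam v t y') y) r
      - ((2 / r : ℝ) : ℂ) * deriv (fun y => chiF T lam v t y) r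
      + ((Vdual (r / (T - t)) / r ^ 2 : ℝ) : ℂ) * chiF T lam v t r = 0) ∧
    (∀ t ∈ Set.Ioo (0:ℝ) T,
      deriv (Ffun T lam v) t ≤ -‖chiF T lam v t (T - t)‖ ^ 2 ∧
      ‖chiF T lam v t (T - t)‖ ^ 2 = (T - t) ^ (-(2 : ℝ) * lam.re) * ‖v 1‖ ^ 2) := by
  have hv2 : ContDiffOn ℝ 2 v (Icc 0 1) := hv.of_le (WithTop.coe_le_coe.mpr le_top)
  have hv2' : ContDiffOn ℝ 2 v (Ioo 0 1) := hv2.mono Ioo_subset_Icc_self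
  have hode' : ∀ ρ ∈ Ioo (0 : ℝ) 1, dualEigenOp lam v ρ = 0 := hode
  refine ⟨fun t r _ _ hr hrt => ?_, fun t ht => ?_⟩
  · rw [waveOp_chiF hv2' hr hrt, hode' _ (div_mem_Ioo_of_lt hr hrt), mul_zero]
  have hboundary : ‖chiF T lam v t (T - t)‖ ^ 2 = (T - t) ^ (-(2 : ℝ) * lam.re) * ‖v 1‖ ^ 2 := by
    rw [chiF_eq_selfSimilar, norm_sq_selfSimilar ht.2, div_self (sub_pos.mpr ht.2).ne']
    simp
  refine ⟨?_, hboundary⟩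
  calc deriv (Ffun T lam v) t
      = (T - t) ^ (-2 * lam.re) * ((2 * lam.re - 1) * energy lam v) := by
        rw [(hasDerivAt_Ffun hv2' ht.2).deriv]
        ring
    _ ≤ (T - t) ^ (-2 * lam.re) * -‖v 1‖ ^ 2 :=
        mul_le_mul_of_nonneg_left (mul_energy_le hv2 hode')
          (Real.rpow_nonneg (sub_pos.mpr ht.2).le _)
    _ = -‖chiF T lam v t (T - t)‖ ^ 2 := by
        rw [hboundary]
        ring

/-- if `v ∈ C^∞[0,1]` solves the dual eigenvalue equation and `v(ρ)/ρ²`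
extends continuously to `[0,1]`, then `χ(t,r) = (T−t)^{−λ}v(r/(T−t))` solves
`χ_tt − χ_rr − (2/r)χ_r + Ṽ(r/(T−t)) r^{-2} χ = 0` in the backward lightcone, and the
functional `F` satisfies `F'(t) ≤ −|χ(t,T−t)|² = −(T−t)^{−2Reλ}|v(1)|²` on `(0,T)`. -/
theorem stmt_14 (T : ℝ) (hT : 0 < T) (lam : ℂ) (v : ℝ → ℂ)
    (hv : ContDiffOn ℝ (⊤ : ℕ∞) v (Set.Icc 0 1))
    (hode : ∀ ρ ∈ Set.Ioo (0:ℝ) 1,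
      -(1 - (ρ:ℂ) ^ 2) * deriv (deriv v) ρ
      - (2 * (1 - (ρ:ℂ) ^ 2) / (ρ:ℂ)) * deriv v ρ
      + 2 * lam * (ρ:ℂ) * deriv v ρ
      + (((Vdual ρ : ℝ) : ℂ) / (ρ:ℂ) ^ 2) * v ρ
      + lam * (lam + 1) * v ρ = 0)
    (hext : ∃ w : ℝ → ℂ, ContinuousOn w (Set.Icc 0 1) ∧
      ∀ ρ ∈ Set.Ioc (0:ℝ) 1, w ρ = v ρ / (ρ:ℂ) ^ 2) :
    (∀ t r : ℝ, 0 < t → t < T → 0 < r → r < T - t →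
      deriv (fun s => deriv (fun s' => chiF T lam v s' r) s) t
      - deriv (fun y => deriv (fun y' => chiF T lam v t y') y) r
      - ((2 / r : ℝ) : ℂ) * deriv (fun y => chiF T lam v t y) r
      + ((Vdual (r / (T - t)) / r ^ 2 : ℝ) : ℂ) * chiF T lam v t r = 0) ∧
    (∀ t ∈ Set.Ioo (0:ℝ) T,
      deriv (Ffun T lam v) t ≤ -‖chiF T lam v t (T - t)‖ ^ 2 ∧
      ‖chiF T lam v t (T - t)‖ ^ 2 = (T - t) ^ (-(2 : ℝ) * lam.re) * ‖v 1‖ ^ 2) :=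
  stmt_14_general T lam v hv hode
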